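/- arXiv:0912.2437 — 2 statements merged into one kernel-verified Lean document; each statement's English description precedes it below -/
import Mathlib

section
/- Let φ₁′, …, φ_K′ : ℝ → ℝ be positive functions with φ_k′(b) > φ_{k−1}′(b) and φ_k′(b) − φ_{k−1}′(b) ≥ d(φ_k′(b) + φ_{k−1}′(b)) for all b and all k ≥ 2, where d > 0. Let 0 < Δ < d/(1+d). Then for each fixed (a,b) with a > 0, there is at most one k ∈ {1,…,K} such that |a·φ_k′(b) − 1| < Δ. -/
/-! Two frequencies with `y - x ≥ d (y + x)` cannot both be scaled by the same `a > 0` into the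
window `(1 - Δ, 1 + Δ)`: the window is too narrow once `Δ < d/(1 + d)`.
Separation of consecutive frequencies propagates to all pairs because the relation is transitive
through a nonnegative middle term. -/

def FreqSeparated (d x y : ℝ) : Prop := d * (y + x) ≤ y - x

namespace FreqSeparated

variable {d x y z : ℝ}

theorem trans (hd : 0 ≤ d) (hy : 0 ≤ y) (hxy : FreqSeparated d x y)
    (hyz : FreqSeparated d y z) : FreqSeparated d x z := by
  unfold FreqSeparated at *
  nlinarith [mul_nonneg hd hy]

theorem not_both_near_one {Δ a : ℝ} (hd : 0 ≤ d) (hΔd : Δ < d / (1 + d)) (ha : 0 ≤ a)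
    (hxy : FreqSeparated d x y) (hx : |a * x - 1| < Δ) (hy : |a * y - 1| < Δ) : False := by
  rw [lt_div_iff₀ (by linarith)] at hΔd
  rw [abs_lt] at hx hy
  have hscaled : d * (a * y + a * x) ≤ a * y - a * x := by
    have := mul_le_mul_of_nonneg_left hxy ha
    linarith
  -- `a (y - x) < 2Δ` while `d · a (y + x) > 2 d (1 - Δ)`, forcing `Δ ≥ d (1 - Δ)`.
  nlinarith

end FreqSeparated

theorem freqSeparated_of_lt {f : ℕ → ℝ} {d : ℝ} {K : ℕ} (hd : 0 ≤ d)
    (hpos : ∀ k < K, 0 ≤ f k) (hstep : ∀ k, k + 1 < K → FreqSeparated d (f k) (f (k + 1)))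
    {l k : ℕ} (hlk : l < k) (hk : k < K) : FreqSeparated d (f l) (f k) := by
  induction k, hlk using Nat.le_induction with
  | base => exact hstep l hk
  | succ n hln ih =>
    exact (ih (by omega)).trans hd (hpos n (by omega)) (hstep n hk)

theorem zone_separation_general (K : ℕ) (φ' : ℕ → ℝ → ℝ) (d Δ : ℝ)
    (hd : 0 < d) (hΔd : Δ < d / (1 + d))
    (hpos : ∀ k < K, ∀ b : ℝ, 0 < φ' k b)
    (hsep : ∀ k : ℕ, k + 1 < K → ∀ b : ℝ,
      φ' k b < φ' (k + 1) b ∧ φ' (k + 1) b - φ' k b ≥ d * (φ' (k + 1) b + φ' k b)) :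
    ∀ (a b : ℝ), 0 < a → ∀ k < K, ∀ l < K,
      |a * φ' k b - 1| < Δ → |a * φ' l b - 1| < Δ → k = l := by
  intro a b ha k hk l hl hk_near hl_near
  have separated {m n : ℕ} (hmn : m < n) (hn : n < K) :
      FreqSeparated d (φ' m b) (φ' n b) :=
    freqSeparated_of_lt hd.le (fun k hk => (hpos k hk b).le) (fun k hk => (hsep k hk b).2) hmn hn
  rcases lt_trichotomy k l with hkl | rfl | hlk
  · exact (separated hkl hl).not_both_near_one hd.le hΔd ha.le hk_near hl_near |>.elim
  · rfl
  · exact (separated hlk hk).not_both_near_one hd.le hΔd ha.le hl_near hk_near |>.elim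

/-- Zone-separation lemma: under the well-separation condition on the instantaneous
frequencies `φ_k′`, for each fixed `(a,b)` with `a > 0` there is at most one `k`
with `|a φ_k′(b) − 1| < Δ`, provided `0 < Δ < d/(1+d)`. -/
theorem zone_separation (K : ℕ) (φ' : ℕ → ℝ → ℝ) (d Δ : ℝ)
    (hd : 0 < d) (hΔ : 0 < Δ) (hΔd : Δ < d / (1 + d))
    (hpos : ∀ k < K, ∀ b : ℝ, 0 < φ' k b)
    (hsep : ∀ k : ℕ, k + 1 < K → ∀ b : ℝ,
      φ' k b < φ' (k + 1) b ∧ φ' (k + 1) b - φ' k b ≥ d * (φ' (k + 1) b + φ' k b)) :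
    ∀ (a b : ℝ), 0 < a → ∀ k < K, ∀ l < K,
      |a * φ' k b - 1| < Δ → |a * φ' l b - 1| < Δ → k = l :=
  zone_separation_general K φ' d Δ hd hΔd hpos hsep
end

section
/- Let W, D, B ∈ ℂ and φ′ > 0 with |−iD − φ′B| ≤ ε·a^{1/2}·Γ₂, |W − B| ≤ ε·a^{3/2}·Γ₁, and |W| ≥ ε^{1/3}. Then the quantity ω := −iD/W satisfies |ω − φ′| ≤ √a·(Γ₂ + a·Γ₁·φ′)·ε^{2/3}. -/
/-! Write `ω - φ' = ((-iD - φ'B) + φ'(B - W)) / W`: both summands of the numerator are `O(ε)`,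
and dividing by `|W| ≥ ε^{1/3}` loses a factor `ε^{1/3}`. -/

theorem norm_div_sub_le_of_le_norm {𝕜 : Type*} [NormedField 𝕜] {n w b c : 𝕜} {δ : ℝ}
    (hδ : 0 < δ) (hw : δ ≤ ‖w‖) :
    ‖n / w - c‖ ≤ (‖n - c * b‖ + ‖c‖ * ‖w - b‖) / δ := by
  have hw0 : w ≠ 0 := norm_pos_iff.mp (hδ.trans_le hw)
  have hsplit : n / w - c = ((n - c * b) + c * (b - w)) / w := by
    field_simp
    ring
  rw [hsplit, norm_div]
  calc ‖n - c * b + c * (b - w)‖ / ‖w‖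
      ≤ (‖n - c * b‖ + ‖c * (b - w)‖) / ‖w‖ := by gcongr; exact norm_add_le _ _
    _ ≤ (‖n - c * b‖ + ‖c * (b - w)‖) / δ := by gcongr
    _ = (‖n - c * b‖ + ‖c‖ * ‖w - b‖) / δ := by rw [norm_mul, norm_sub_rev b w]

theorem instFreq_accuracy_general (W D B : ℂ) (φ' ε a Γ₁ Γ₂ : ℝ)
    (hφ : 0 < φ') (hε : 0 < ε)
    (h1 : ‖-Complex.I * D - (φ' : ℂ) * B‖ ≤ ε * Real.sqrt a * Γ₂)
    (h2 : ‖W - B‖ ≤ ε * (a * Real.sqrt a) * Γ₁)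
    (h3 : ε ^ ((1 : ℝ)/3) ≤ ‖W‖) :
    ‖-Complex.I * D / W - (φ' : ℂ)‖
      ≤ Real.sqrt a * (Γ₂ + a * Γ₁ * φ') * ε ^ ((2 : ℝ)/3) := by
  have hε_root : ε / ε ^ ((1 : ℝ)/3) = ε ^ ((2 : ℝ)/3) := by
    rw [show (2 : ℝ)/3 = 1 - 1/3 by norm_num, Real.rpow_sub hε, Real.rpow_one]
  calc ‖-Complex.I * D / W - (φ' : ℂ)‖
      ≤ (‖-Complex.I * D - (φ' : ℂ) * B‖ + ‖(φ' : ℂ)‖ * ‖W - B‖) / ε ^ ((1 : ℝ)/3) :=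
        norm_div_sub_le_of_le_norm (by positivity) h3
    _ ≤ (ε * Real.sqrt a * Γ₂ + φ' * (ε * (a * Real.sqrt a) * Γ₁)) / ε ^ ((1 : ℝ)/3) := by
        rw [Complex.norm_real, Real.norm_of_nonneg hφ.le]
        gcongr
    _ = Real.sqrt a * (Γ₂ + a * Γ₁ * φ') * (ε / ε ^ ((1 : ℝ)/3)) := by ring
    _ = Real.sqrt a * (Γ₂ + a * Γ₁ * φ') * ε ^ ((2 : ℝ)/3) := by rw [hε_root]

/-- Core algebraic step of Estimate 5: with `|−iD − φ′B| ≤ ε a^{1/2} Γ₂`,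
`|W − B| ≤ ε a^{3/2} Γ₁` and `|W| ≥ ε^{1/3}`, the quantity `ω = −iD/W` satisfies
`|ω − φ′| ≤ √a (Γ₂ + a Γ₁ φ′) ε^{2/3}`. -/
theorem instFreq_accuracy (W D B : ℂ) (φ' ε a Γ₁ Γ₂ : ℝ)
    (hφ : 0 < φ') (hε : 0 < ε) (ha : 0 < a) (hΓ₁ : 0 < Γ₁) (hΓ₂ : 0 < Γ₂)
    (h1 : ‖-Complex.I * D - (φ' : ℂ) * B‖ ≤ ε * Real.sqrt a * Γ₂)
    (h2 : ‖W - B‖ ≤ ε * (a * Real.sqrt a) * Γ₁)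
    (h3 : ε ^ ((1 : ℝ)/3) ≤ ‖W‖) :
    ‖-Complex.I * D / W - (φ' : ℂ)‖
      ≤ Real.sqrt a * (Γ₂ + a * Γ₁ * φ') * ε ^ ((2 : ℝ)/3) :=
  instFreq_accuracy_general W D B φ' ε a Γ₁ Γ₂ hφ hε h1 h2 h3
end
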